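/- Let T be a rooted phylogenetic X-tree whose positive edge lengths satisfy the ultrametric condition, let A ⊆ X with |A| = k, and suppose k is a branching value of T. Then A is a size-k maxPD set if and only if A contains exactly one leaf from each connected component of the forest T[R(d_k)]. -/

import Mathlib

/-!
Rooted phylogenetic `X`-trees with positive edge lengths.

A tree on a finite vertex type `V` is encoded by its parent function: the root
has no parent, every other vertex has one, and iterating the parent function
reaches the root.  The edge into a non-root vertex `v` has length `len v`, and
`hgt v` is the distance from the root to `v`.  Leaves are the vertices with no
children; the taxon set `X` of the paper is the set `leaves` of leaves.
Every non-leaf, non-root vertex has out-degree (number of children) at least 2.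
-/

noncomputable section

attribute [local instance] Classical.propDecidable

structure PhyloTree (V : Type) [Fintype V] [DecidableEq V] where
  root : V
  parent : V → Option V
  len : V → ℝ
  hgt : V → ℝ
  parent_root : parent root = none
  parent_isSome : ∀ v, v ≠ root → (parent v).isSome
  reaches_root : ∀ v, Relation.ReflTransGen (fun a b => parent a = some b) v root
  hgt_root : hgt root = 0
  hgt_eq : ∀ v u, parent v = some u → hgt v = hgt u + len v
  len_pos : ∀ v, v ≠ root → 0 < len v
  outdeg_ge_two : ∀ v, v ≠ root → (∃ u, parent u = some v) →
    2 ≤ Set.ncard {u | parent u = some v}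

namespace PhyloTree

variable {V : Type} [Fintype V] [DecidableEq V]

/-- `T.step a b` : `b` is the parent of `a`. -/
def step (T : PhyloTree V) (a b : V) : Prop := T.parent a = some b

/-- `T.anc u v` : `u` is an ancestor of `v`, i.e. `u` lies on the (unique) path
from the root to `v` (reflexively). -/
def anc (T : PhyloTree V) (u v : V) : Prop := Relation.ReflTransGen T.step v u

/-- a leaf is a vertex with no children. -/
def IsLeaf (T : PhyloTree V) (v : V) : Prop := ∀ u, T.parent u ≠ some v

/-- the leaf set (the taxon set `X`). -/
def leaves (T : PhyloTree V) : Set V := {v | T.IsLeaf v}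

/-- Phylogenetic diversity of a set `Y`: the total length of all edges `e`
whose set of descendant leaves meets `Y` (the edge into a non-root vertex `v`
has length `T.len v`). -/
def PD (T : PhyloTree V) (Y : Set V) : ℝ :=
  ∑ v : V, if v ≠ T.root ∧ ∃ x ∈ Y, T.IsLeaf x ∧ T.anc v x then T.len v else 0

/-- the ultrametric condition: all leaves are at the same distance from the root. -/
def Ultrametric (T : PhyloTree V) : Prop :=
  ∀ x y, T.IsLeaf x → T.IsLeaf y → T.hgt x = T.hgt y

/-- `R d`: the set of vertices within distance `d` above some leaf. -/
def R (T : PhyloTree V) (d : ℝ) : Set V :=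
  {v | ∃ x, T.IsLeaf x ∧ T.anc v x ∧ T.hgt x - T.hgt v ≤ d}

/-- adjacency in the forest induced by `T` on a vertex set `S`. -/
def adjIn (T : PhyloTree V) (S : Set V) (u v : V) : Prop :=
  u ∈ S ∧ v ∈ S ∧ (T.parent u = some v ∨ T.parent v = some u)

/-- the connected components of the forest induced by `T` on `S`. -/
def components (T : PhyloTree V) (S : Set V) : Set (Set V) :=
  {C | ∃ v ∈ S, C = S ∩ {u | Relation.ReflTransGen (T.adjIn S) v u}}

/-- `c d`: the number of connected components of the forest `T[R(d)]`. -/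
def ccount (T : PhyloTree V) (d : ℝ) : ℕ := (T.components (T.R d)).ncard

/-- `k` is a branching value if `T[R(d)]` has exactly `k` components for some `d ≥ 0`. -/
def IsBranchingValue (T : PhyloTree V) (k : ℕ) : Prop := ∃ d : ℝ, 0 ≤ d ∧ T.ccount d = k

/-- the branching distance `d_k = min {d : c(d) = k}`. -/
def branchDist (T : PhyloTree V) (k : ℕ) : ℝ := sInf {d | 0 ≤ d ∧ T.ccount d = k}

/-- `k⁻`: the largest branching value `≤ k`. -/
def kminus (T : PhyloTree V) (k : ℕ) : ℕ := sSup {j | j ≤ k ∧ T.IsBranchingValue j}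

/-- `k⁺`: the smallest branching value `≥ k`. -/
def kplus (T : PhyloTree V) (k : ℕ) : ℕ := sInf {j | k ≤ j ∧ T.IsBranchingValue j}

/-- `A` is a size-`k` maxPD set. -/
def IsMaxPD (T : PhyloTree V) (k : ℕ) (A : Set V) : Prop :=
  A ⊆ T.leaves ∧ A.ncard = k ∧ ∀ Y ⊆ T.leaves, Y.ncard = k → T.PD Y ≤ T.PD A

/-- `A` is a size-`k` minPD set. -/
def IsMinPD (T : PhyloTree V) (k : ℕ) (A : Set V) : Prop :=
  A ⊆ T.leaves ∧ A.ncard = k ∧ ∀ Y ⊆ T.leaves, Y.ncard = k → T.PD A ≤ T.PD Y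

/-- `m T k`: the number of size-`k` maxPD sets of `T`. -/
def m (T : PhyloTree V) (k : ℕ) : ℕ := {A : Set V | T.IsMaxPD k A}.ncard

/-- `T` is binary: every non-leaf vertex has exactly two children. -/
def Binary (T : PhyloTree V) : Prop :=
  ∀ v, ¬ T.IsLeaf v → Set.ncard {u | T.parent u = some v} = 2

end PhyloTree

/-!
In an ultrametric tree every leaf has the same height `h`, so `R d` is the set of vertices of
height at least `h - d`, and its components are the subtrees hanging from the component roots
(the vertices of `R d` whose parent lies outside `R d`).  Adding a leaf `a` to a set `Y` of
leaves increases `PD` by `h - hgt z`, where `z` is the deepest ancestor of `a` on the subtree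
spanned by `Y` and the root.  This gain is at most `d` when `Y` already meets the component of
`a`, exceeds `d` when it does not, and then does not depend on which leaf of that component is
chosen.  So moving a leaf out of a component met twice into a missed component strictly
increases `PD`: a maximiser meets each of the `k` components of `T[R(d_k)]` exactly once.
Conversely, swapping leaves inside components shows that all such sets have the same `PD`.
-/

lemma Set.exists_isLeast_of_forall_exists_le {α : Type*} [LinearOrder α] {S F : Set α}
    (hF : F.Finite) (hS : S.Nonempty) (hlow : ∀ d ∈ S, ∃ t ∈ S ∩ F, t ≤ d) :
    ∃ d, IsLeast S d := by
  obtain ⟨d, hd⟩ := hS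
  obtain ⟨t, ht, htmin⟩ := Set.exists_min_image (S ∩ F) id (hF.subset Set.inter_subset_right)
    (let ⟨t, ht, _⟩ := hlow d hd; ⟨t, ht⟩)
  refine ⟨t, ht.1, fun d' hd' => ?_⟩
  obtain ⟨t', ht', hle⟩ := hlow d' hd'
  exact (htmin t' ht').trans hle

lemma Set.ncard_insert_sdiff_singleton_inter {α : Type*} [Finite α] {Y D : Set α} {x a : α}
    (hx : x ∈ Y) (ha : a ∉ Y) (hxa : x ∈ D ↔ a ∈ D) :
    (insert a (Y \ {x}) ∩ D).ncard = (Y ∩ D).ncard := by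
  by_cases hxD : x ∈ D
  · rw [Set.insert_inter_of_mem (hxa.mp hxD), Set.sdiff_inter_right_comm,
      Set.ncard_exchange (fun h : a ∈ Y ∩ D => ha h.1) ⟨hx, hxD⟩]
  · rw [Set.insert_inter_of_notMem (hxa.not.mp hxD), Set.sdiff_inter_right_comm,
      Set.sdiff_singleton_eq_self fun h => hxD h.2]

namespace PhyloTree

variable {V : Type} [Fintype V] [DecidableEq V] (T : PhyloTree V)

section Ancestry

lemma ne_root_of_parent {a p : V} (hp : T.parent a = some p) : a ≠ T.root := by
  rintro rfl; simp [T.parent_root] at hp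

lemma hgt_lt_of_parent {a p : V} (hp : T.parent a = some p) : T.hgt p < T.hgt a := by
  linarith [T.hgt_eq a p hp, T.len_pos a (T.ne_root_of_parent hp)]

lemma anc_refl (v : V) : T.anc v v := Relation.ReflTransGen.refl

lemma anc_trans {u v w : V} (huv : T.anc u v) (hvw : T.anc v w) : T.anc u w :=
  hvw.trans huv

lemma anc_of_parent {v p : V} (hp : T.parent v = some p) : T.anc p v :=
  Relation.ReflTransGen.single hp

lemma anc_root (v : V) : T.anc T.root v := T.reaches_root v

lemma anc_iff_eq_or_anc_of_parent {u a p : V} (hp : T.parent a = some p) :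
    T.anc u a ↔ u = a ∨ T.anc u p := by
  simp only [anc, Relation.ReflTransGen.cases_head_iff (a := a), step, hp, Option.some.injEq,
    exists_eq_left', eq_comm]

lemma anc_parent_of_ne {u a p : V} (hua : T.anc u a) (hne : u ≠ a)
    (hp : T.parent a = some p) : T.anc u p :=
  ((T.anc_iff_eq_or_anc_of_parent hp).mp hua).resolve_left hne

lemma eq_root_of_anc_root {v : V} (h : T.anc v T.root) : v = T.root := by
  rcases Relation.ReflTransGen.cases_head h with h | ⟨p, hp, -⟩
  · exact h.symm
  · exact absurd rfl (T.ne_root_of_parent hp)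

lemma hgt_le_of_anc {u v : V} (h : T.anc u v) : T.hgt u ≤ T.hgt v := by
  induction h with
  | refl => exact le_rfl
  | tail _ hp ih => exact (T.hgt_lt_of_parent hp).le.trans ih

lemma hgt_lt_of_anc {u v : V} (h : T.anc u v) (hne : u ≠ v) : T.hgt u < T.hgt v := by
  rcases Relation.ReflTransGen.cases_head h with h | ⟨p, hp, hup⟩
  · exact absurd h.symm hne
  · exact (T.hgt_le_of_anc hup).trans_lt (T.hgt_lt_of_parent hp)

lemma anc_total {u v x : V} (hux : T.anc u x) (hvx : T.anc v x) : T.anc u v ∨ T.anc v u := by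
  induction hux with
  | refl => exact Or.inr hvx
  | @tail b p _ hp ih =>
    rcases ih with hbv | hvb
    · exact Or.inl (T.anc_trans (T.anc_of_parent hp) hbv)
    · by_cases hvb' : v = b
      · exact Or.inl (hvb' ▸ T.anc_of_parent hp)
      · exact Or.inr (T.anc_parent_of_ne hvb hvb' hp)

lemma exists_leaf_desc (v : V) : ∃ x, T.IsLeaf x ∧ T.anc v x := by
  obtain ⟨x, hvx, hmax⟩ :=
    Set.exists_max_image {x | T.anc v x} T.hgt (Set.toFinite _) ⟨v, T.anc_refl v⟩
  exact ⟨x, fun u hu => (hmax u (T.anc_trans hvx (T.anc_of_parent hu))).not_gt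
    (T.hgt_lt_of_parent hu), hvx⟩

end Ancestry

section Diversity

def ancSet (Y : Set V) : Set V := {v | ∃ x ∈ Y, T.IsLeaf x ∧ T.anc v x}

/-- The vertices whose incoming edges form the path from `z` down to `a`. -/
def pathEdges (z a : V) : Set V := {v | T.anc z v ∧ T.anc v a ∧ v ≠ z}

lemma PD_eq_finsum (Y : Set V) : T.PD Y = ∑ᶠ v ∈ T.ancSet Y \ {T.root}, T.len v := by
  rw [finsum_mem_def, finsum_eq_sum_of_fintype]
  refine Finset.sum_congr rfl fun v _ => ?_
  simp only [Set.indicator_apply, ancSet, Set.mem_sdiff, Set.mem_ofPred_eq,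
    Set.mem_singleton_iff, and_comm]

lemma finsum_len_pathEdges {z a : V} (h : T.anc z a) :
    ∑ᶠ v ∈ T.pathEdges z a, T.len v = T.hgt a - T.hgt z := by
  induction h using Relation.ReflTransGen.head_induction_on with
  | refl =>
    have hempty : T.pathEdges z z = ∅ :=
      Set.eq_empty_of_forall_notMem fun v ⟨hzv, hvz, hne⟩ =>
        (T.hgt_lt_of_anc hzv (Ne.symm hne)).not_ge (T.hgt_le_of_anc hvz)
    simp [hempty]
  | @head a p hp hpz ih =>
    have hza : T.anc z a := T.anc_trans hpz (T.anc_of_parent hp)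
    have haz : a ≠ z := fun h => (T.hgt_le_of_anc hpz).not_gt (h ▸ T.hgt_lt_of_parent hp)
    have hpath : T.pathEdges z a = insert a (T.pathEdges z p) := by
      ext v
      simp only [pathEdges, Set.mem_ofPred_eq, Set.mem_insert_iff,
        T.anc_iff_eq_or_anc_of_parent hp]
      constructor
      · rintro ⟨hzv, rfl | hvp, hvz⟩
        · exact Or.inl rfl
        · exact Or.inr ⟨hzv, hvp, hvz⟩
      · rintro (rfl | ⟨hzv, hvp, hvz⟩)
        · exact ⟨hza, Or.inl rfl, haz⟩
        · exact ⟨hzv, Or.inr hvp, hvz⟩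
    have ha : a ∉ T.pathEdges z p := fun h =>
      (T.hgt_le_of_anc h.2.1).not_gt (T.hgt_lt_of_parent hp)
    rw [hpath, finsum_mem_insert _ ha (Set.toFinite _), ih, T.hgt_eq a p hp]
    ring

def attach (a : V) (Y : Set V) : Set V := {v | T.anc v a ∧ (v = T.root ∨ v ∈ T.ancSet Y)}

lemma exists_deepest_mem_attach (a : V) (Y : Set V) :
    ∃ z ∈ T.attach a Y, ∀ v ∈ T.attach a Y, T.hgt v ≤ T.hgt z :=
  Set.exists_max_image _ T.hgt (Set.toFinite _) ⟨T.root, T.anc_root a, Or.inl rfl⟩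

lemma ancSet_insert {a : V} (ha : T.IsLeaf a) (Y : Set V) :
    T.ancSet (insert a Y) = {v | T.anc v a} ∪ T.ancSet Y := by
  ext v
  simp only [ancSet, Set.mem_union, Set.mem_ofPred_eq, Set.exists_mem_insert]
  exact ⟨Or.imp And.right id, Or.imp (⟨ha, ·⟩) id⟩

lemma notMem_attach_of_mem_pathEdges {a z v : V} {Y : Set V}
    (hzmax : ∀ v ∈ T.attach a Y, T.hgt v ≤ T.hgt z) (hv : v ∈ T.pathEdges z a) :
    v ∉ T.attach a Y := fun hva =>
  (hzmax v hva).not_gt (T.hgt_lt_of_anc hv.1 (Ne.symm hv.2.2))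

lemma ancSet_insert_sdiff_root {a z : V} (ha : T.IsLeaf a) {Y : Set V} (hz : z ∈ T.attach a Y)
    (hzmax : ∀ v ∈ T.attach a Y, T.hgt v ≤ T.hgt z) :
    T.ancSet (insert a Y) \ {T.root} = (T.ancSet Y \ {T.root}) ∪ T.pathEdges z a := by
  ext v
  rw [T.ancSet_insert ha, Set.union_sdiff_distrib, Set.union_comm]
  by_cases hvY : v ∈ T.ancSet Y \ {T.root}
  · simp only [Set.mem_union, hvY, true_or]
  simp only [Set.mem_union, hvY, false_or, Set.mem_sdiff, Set.mem_singleton_iff,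
    Set.mem_ofPred_eq]
  have hvY' : v ≠ T.root → v ∉ T.ancSet Y := fun hvr hv => hvY ⟨hv, hvr⟩
  constructor
  · rintro ⟨hva, hvr⟩
    have hvz : v ≠ z := by
      rintro rfl
      exact hz.2.elim hvr (hvY' hvr)
    refine ⟨(T.anc_total hz.1 hva).resolve_right fun hvz' => ?_, hva, hvz⟩
    rcases hz.2 with rfl | ⟨x, hx, hxl, hzx⟩
    · exact hvr (T.eq_root_of_anc_root hvz')
    · exact hvY' hvr ⟨x, hx, hxl, T.anc_trans hvz' hzx⟩
  · intro hv
    exact ⟨hv.2.1, fun hvr => T.notMem_attach_of_mem_pathEdges hzmax hv ⟨hv.2.1, Or.inl hvr⟩⟩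

lemma PD_insert {a z : V} (ha : T.IsLeaf a) {Y : Set V} (hz : z ∈ T.attach a Y)
    (hzmax : ∀ v ∈ T.attach a Y, T.hgt v ≤ T.hgt z) :
    T.PD (insert a Y) = T.PD Y + (T.hgt a - T.hgt z) := by
  have hdisj : Disjoint (T.ancSet Y \ {T.root}) (T.pathEdges z a) :=
    Set.disjoint_left.mpr fun v hvY hv =>
      T.notMem_attach_of_mem_pathEdges hzmax hv ⟨hv.2.1, Or.inr hvY.1⟩
  rw [T.PD_eq_finsum, T.PD_eq_finsum, T.ancSet_insert_sdiff_root ha hz hzmax,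
    finsum_mem_union hdisj (Set.toFinite _) (Set.toFinite _), T.finsum_len_pathEdges hz.1]

end Diversity

section Components

variable {T}

def compRoots (d : ℝ) : Set V := {m | m ∈ T.R d ∧ ∀ p, T.parent m = some p → p ∉ T.R d}

def desc (m : V) : Set V := {u | T.anc m u}

lemma leaf_mem_R {d : ℝ} (hd : 0 ≤ d) {x : V} (hx : T.IsLeaf x) : x ∈ T.R d :=
  ⟨x, hx, T.anc_refl x, by simpa using hd⟩

lemma exists_compRoot_anc {d : ℝ} {v : V} (hv : v ∈ T.R d) : ∃ m ∈ T.compRoots d, T.anc m v := by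
  obtain ⟨m, ⟨hmR, hmv⟩, hmin⟩ :=
    Set.exists_min_image {u | u ∈ T.R d ∧ T.anc u v} T.hgt (Set.toFinite _) ⟨v, hv, T.anc_refl v⟩
  exact ⟨m, ⟨hmR, fun p hp hpR => (hmin p ⟨hpR, T.anc_trans (T.anc_of_parent hp) hmv⟩).not_gt
    (T.hgt_lt_of_parent hp)⟩, hmv⟩

variable {h : ℝ}

lemma mem_R_iff (hl : ∀ x, T.IsLeaf x → T.hgt x = h) {d : ℝ} {v : V} :
    v ∈ T.R d ↔ h - T.hgt v ≤ d := by
  constructor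
  · rintro ⟨x, hx, -, hle⟩
    rwa [hl x hx] at hle
  · intro hle
    obtain ⟨x, hx, hvx⟩ := T.exists_leaf_desc v
    exact ⟨x, hx, hvx, by rwa [hl x hx]⟩

lemma desc_subset_R (hl : ∀ x, T.IsLeaf x → T.hgt x = h) {d : ℝ} {m : V} (hm : m ∈ T.R d) :
    T.desc m ⊆ T.R d := fun _ hu => by
  rw [mem_R_iff hl] at hm ⊢
  linarith [T.hgt_le_of_anc hu]

lemma compRoots_eq_of_anc (hl : ∀ x, T.IsLeaf x → T.hgt x = h) {d : ℝ} {m₁ m₂ : V}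
    (h₁ : m₁ ∈ T.compRoots d) (h₂ : m₂ ∈ T.compRoots d) (hanc : T.anc m₁ m₂) : m₁ = m₂ := by
  by_contra hne
  have hroot : m₂ ≠ T.root := by
    rintro rfl
    exact hne (T.eq_root_of_anc_root hanc)
  obtain ⟨p, hp⟩ := Option.isSome_iff_exists.mp (T.parent_isSome m₂ hroot)
  have hpR : p ∈ T.R d := by
    have := (mem_R_iff hl).mp h₁.1
    rw [mem_R_iff hl]
    linarith [T.hgt_le_of_anc (T.anc_parent_of_ne hanc hne hp)]
  exact h₂.2 p hp hpR

lemma compRoots_eq_of_mem_desc (hl : ∀ x, T.IsLeaf x → T.hgt x = h) {d : ℝ} {m₁ m₂ v : V}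
    (h₁ : m₁ ∈ T.compRoots d) (h₂ : m₂ ∈ T.compRoots d) (hv₁ : v ∈ T.desc m₁)
    (hv₂ : v ∈ T.desc m₂) : m₁ = m₂ :=
  (T.anc_total hv₁ hv₂).elim (compRoots_eq_of_anc hl h₁ h₂)
    fun hanc => (compRoots_eq_of_anc hl h₂ h₁ hanc).symm

lemma adjIn_reach_of_mem_desc (hl : ∀ x, T.IsLeaf x → T.hgt x = h) {d : ℝ} {m v : V}
    (hm : m ∈ T.R d) (hv : v ∈ T.desc m) : Relation.ReflTransGen (T.adjIn (T.R d)) m v := by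
  induction hv using Relation.ReflTransGen.head_induction_on with
  | refl => exact Relation.ReflTransGen.refl
  | @head v p hp hpm ih =>
    have hpR : p ∈ T.R d := desc_subset_R hl hm hpm
    exact ih.tail ⟨hpR, desc_subset_R hl hpR (T.anc_of_parent hp), Or.inr hp⟩

lemma mem_desc_of_adjIn_reach {d : ℝ} {m v : V} (hm : m ∈ T.compRoots d)
    (hv : Relation.ReflTransGen (T.adjIn (T.R d)) m v) : v ∈ T.desc m := by
  induction hv with
  | refl => exact T.anc_refl m
  | @tail u w _ huw ih =>
    rcases huw.2.2 with hp | hp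
    · have hum : u ≠ m := by
        rintro rfl
        exact hm.2 w hp huw.2.1
      exact T.anc_parent_of_ne ih (Ne.symm hum) hp
    · exact T.anc_trans ih (T.anc_of_parent hp)

instance instSymmAdjIn (S : Set V) : Std.Symm (T.adjIn S) :=
  ⟨fun _ _ ⟨hu, hv, hp⟩ => ⟨hv, hu, hp.symm⟩⟩

lemma components_R_eq (hl : ∀ x, T.IsLeaf x → T.hgt x = h) (d : ℝ) :
    T.components (T.R d) = T.desc '' T.compRoots d := by
  have hcomp : ∀ m ∈ T.compRoots d,
      T.R d ∩ {u | Relation.ReflTransGen (T.adjIn (T.R d)) m u} = T.desc m := fun m hm =>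
    Set.ext fun u => ⟨fun hu => mem_desc_of_adjIn_reach hm hu.2,
      fun hu => ⟨desc_subset_R hl hm.1 hu, adjIn_reach_of_mem_desc hl hm.1 hu⟩⟩
  ext C
  constructor
  · rintro ⟨v, hv, rfl⟩
    obtain ⟨m, hm, hmv⟩ := exists_compRoot_anc hv
    have hreach := adjIn_reach_of_mem_desc hl hm.1 hmv
    refine ⟨m, hm, (hcomp m hm).symm.trans ?_⟩
    ext u
    exact and_congr_right fun _ =>
      ⟨fun hu => (Std.Symm.symm _ _ hreach).trans hu, fun hu => hreach.trans hu⟩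
  · rintro ⟨m, hm, rfl⟩
    exact ⟨m, hm.1, (hcomp m hm).symm⟩

lemma ccount_eq_ncard_compRoots (hl : ∀ x, T.IsLeaf x → T.hgt x = h) (d : ℝ) :
    T.ccount d = (T.compRoots d).ncard := by
  rw [ccount, components_R_eq hl, Set.InjOn.ncard_image]
  intro m₁ h₁ m₂ h₂ heq
  exact compRoots_eq_of_anc hl h₁ h₂ (heq ▸ T.anc_refl m₂ : m₂ ∈ T.desc m₁)

/-- `c` is constant between consecutive values `h - hgt v`, so the infimum `d_k` is attained. -/
lemma branchDist_spec (hl : ∀ x, T.IsLeaf x → T.hgt x = h) {k : ℕ}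
    (hbv : T.IsBranchingValue k) : 0 ≤ T.branchDist k ∧ T.ccount (T.branchDist k) = k := by
  obtain ⟨x₀, hx₀, -⟩ := T.exists_leaf_desc T.root
  set S : Set ℝ := {d | 0 ≤ d ∧ T.ccount d = k} with hS
  have hlow : ∀ d ∈ S, ∃ t ∈ S ∩ Set.range (fun v => h - T.hgt v), t ≤ d := by
    rintro d ⟨hd, hdk⟩
    have hx₀d : h - T.hgt x₀ ≤ d := by rwa [hl x₀ hx₀, sub_self]
    obtain ⟨w, hw, hwmax⟩ := Set.exists_max_image {v | h - T.hgt v ≤ d} (fun v => h - T.hgt v)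
      (Set.toFinite _) ⟨x₀, hx₀d⟩
    have hR : T.R (h - T.hgt w) = T.R d := by
      ext v
      rw [mem_R_iff hl, mem_R_iff hl]
      exact ⟨fun hv => hv.trans hw, hwmax v⟩
    have hw0 : 0 ≤ h - T.hgt w := by
      simpa [hl x₀ hx₀] using hwmax x₀ hx₀d
    exact ⟨_, ⟨⟨hw0, by rw [ccount, hR]; exact hdk⟩, w, rfl⟩, hw⟩
  obtain ⟨d, hd⟩ := Set.exists_isLeast_of_forall_exists_le (S := S) (Set.finite_range _) hbv hlow
  rw [branchDist, ← hS, hd.csInf_eq]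
  exact hd.1

end Components

section Exchange

variable {T} {h : ℝ}

lemma PD_insert_le_of_inter_desc_nonempty (hl : ∀ x, T.IsLeaf x → T.hgt x = h) {d : ℝ}
    {Y : Set V} (hY : Y ⊆ T.leaves) {m a : V} (hm : m ∈ T.compRoots d) (ha : T.IsLeaf a)
    (ham : a ∈ T.desc m) (hYm : (Y ∩ T.desc m).Nonempty) : T.PD (insert a Y) ≤ T.PD Y + d := by
  obtain ⟨z, hz, hzmax⟩ := T.exists_deepest_mem_attach a Y
  obtain ⟨y, hyY, hym⟩ := hYm
  have hmz := hzmax m ⟨ham, Or.inr ⟨y, hyY, hY hyY, hym⟩⟩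
  have hmR := (mem_R_iff hl).mp hm.1
  rw [T.PD_insert ha hz hzmax, hl a ha]
  linarith

lemma lt_PD_insert_of_disjoint_desc (hl : ∀ x, T.IsLeaf x → T.hgt x = h) {d : ℝ}
    {Y : Set V} (hYne : Y.Nonempty) {m a : V} (hm : m ∈ T.compRoots d) (ha : T.IsLeaf a)
    (ham : a ∈ T.desc m) (hYm : Disjoint Y (T.desc m)) : T.PD Y + d < T.PD (insert a Y) := by
  obtain ⟨z, hz, hzmax⟩ := T.exists_deepest_mem_attach a Y
  rw [T.PD_insert ha hz hzmax, hl a ha, add_lt_add_iff_left]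
  by_contra! hzR
  obtain ⟨m', hm', hm'z⟩ := exists_compRoot_anc ((mem_R_iff hl).mpr hzR)
  have hzm : z ∈ T.desc m :=
    compRoots_eq_of_mem_desc hl hm' hm (T.anc_trans hm'z hz.1) ham ▸ hm'z
  obtain ⟨y, hyY⟩ := hYne
  rcases hz.2 with rfl | ⟨x, hxY, -, hzx⟩
  · exact Set.disjoint_left.mp hYm hyY (T.eq_root_of_anc_root hzm ▸ T.anc_root y)
  · exact Set.disjoint_left.mp hYm hxY (T.anc_trans hzm hzx)

lemma attach_eq_attach_of_disjoint_desc (hl : ∀ x, T.IsLeaf x → T.hgt x = h) {d : ℝ}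
    {Y : Set V} {m a : V} (hm : m ∈ T.compRoots d) (ham : a ∈ T.desc m)
    (hYm : Disjoint Y (T.desc m)) : T.attach a Y = T.attach m Y := by
  ext v
  refine ⟨fun hv => ⟨?_, hv.2⟩, fun hv => ⟨T.anc_trans hv.1 ham, hv.2⟩⟩
  obtain ⟨hva, rfl | ⟨x, hxY, -, hvx⟩⟩ := hv
  · exact T.anc_root m
  have hvR : v ∉ T.R d := fun hvR => by
    obtain ⟨m', hm', hm'v⟩ := exists_compRoot_anc hvR
    have hm'm := compRoots_eq_of_mem_desc hl hm' hm (T.anc_trans hm'v hva) ham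
    exact Set.disjoint_left.mp hYm hxY (hm'm ▸ T.anc_trans hm'v hvx)
  have hlt : T.hgt v < T.hgt m := by
    have := (mem_R_iff hl).mp hm.1
    rw [mem_R_iff hl] at hvR
    linarith
  exact (T.anc_total hva ham).resolve_right fun hmv => (T.hgt_le_of_anc hmv).not_gt hlt

lemma PD_insert_eq_of_disjoint_desc (hl : ∀ x, T.IsLeaf x → T.hgt x = h) {d : ℝ}
    {Y : Set V} {m a a' : V} (hm : m ∈ T.compRoots d) (ha : T.IsLeaf a) (ha' : T.IsLeaf a')
    (ham : a ∈ T.desc m) (ha'm : a' ∈ T.desc m) (hYm : Disjoint Y (T.desc m)) :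
    T.PD (insert a Y) = T.PD (insert a' Y) := by
  obtain ⟨z, hz, hzmax⟩ := T.exists_deepest_mem_attach m Y
  have hgain : ∀ b, T.IsLeaf b → b ∈ T.desc m → T.PD (insert b Y) = T.PD Y + (h - T.hgt z) := by
    intro b hb hbm
    rw [← attach_eq_attach_of_disjoint_desc hl hm hbm hYm] at hz hzmax
    rw [T.PD_insert hb hz hzmax, hl b hb]
  rw [hgain a ha ham, hgain a' ha' ha'm]

lemma exists_PD_lt_of_two_mem_desc (hl : ∀ x, T.IsLeaf x → T.hgt x = h) {d : ℝ}
    {Y : Set V} (hY : Y ⊆ T.leaves) {m₁ m₂ y y' : V} (hm₁ : m₁ ∈ T.compRoots d)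
    (hm₂ : m₂ ∈ T.compRoots d) (hYm₁ : Disjoint Y (T.desc m₁)) (hy : y ∈ Y ∩ T.desc m₂)
    (hy' : y' ∈ Y ∩ T.desc m₂) (hne : y ≠ y') :
    ∃ Z ⊆ T.leaves, Z.ncard = Y.ncard ∧ T.PD Y < T.PD Z := by
  obtain ⟨a, ha, hm₁a⟩ := T.exists_leaf_desc m₁
  have haY : a ∉ Y := fun haY => Set.disjoint_left.mp hYm₁ haY hm₁a
  have hy'Y : y' ∈ Y \ {y} := ⟨hy'.1, Ne.symm hne⟩
  refine ⟨insert a (Y \ {y}), Set.insert_subset ha (Set.sdiff_subset.trans hY),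
    Set.ncard_exchange haY hy.1, ?_⟩
  calc T.PD Y = T.PD (insert y (Y \ {y})) := by
        rw [Set.insert_sdiff_singleton, Set.insert_eq_of_mem hy.1]
    _ ≤ T.PD (Y \ {y}) + d := PD_insert_le_of_inter_desc_nonempty hl
        (Set.sdiff_subset.trans hY) hm₂ (hY hy.1) hy.2 ⟨y', hy'Y, hy'.2⟩
    _ < T.PD (insert a (Y \ {y})) := lt_PD_insert_of_disjoint_desc hl ⟨y', hy'Y⟩ hm₁ ha hm₁a
        (hYm₁.mono_left Set.sdiff_subset)

end Exchange

section OnePerComponent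

variable {T} {h : ℝ}

lemma ncard_inter_desc_eq_one_of_forall_PD_le (hl : ∀ x, T.IsLeaf x → T.hgt x = h) {d : ℝ}
    (hd : 0 ≤ d) {Y : Set V} (hY : Y ⊆ T.leaves) (hcard : Y.ncard = (T.compRoots d).ncard)
    (hmax : ∀ Z ⊆ T.leaves, Z.ncard = Y.ncard → T.PD Z ≤ T.PD Y) :
    ∀ m ∈ T.compRoots d, (Y ∩ T.desc m).ncard = 1 := by
  choose! ρ hρ using fun x (hx : x ∈ Y) => exists_compRoot_anc (T := T) (leaf_mem_R hd (hY hx))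
  have hρ_eq : ∀ x ∈ Y, ∀ m ∈ T.compRoots d, x ∈ T.desc m → ρ x = m := fun x hx m hm hxm =>
    compRoots_eq_of_mem_desc hl (hρ x hx).1 hm (hρ x hx).2 hxm
  have hsurj : ∀ m ∈ T.compRoots d, ∃ x, ∃ _ : x ∈ Y, ρ x = m := by
    intro m₁ hm₁
    by_contra! hmiss
    have hlt : (T.compRoots d \ {m₁}).ncard < Y.ncard := by
      rw [Set.ncard_sdiff_singleton_of_mem hm₁, hcard]
      exact Nat.sub_lt ((Set.ncard_pos (Set.toFinite _)).mpr ⟨m₁, hm₁⟩) one_pos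
    obtain ⟨y, hy, y', hy', hne, hρy⟩ := Set.exists_ne_map_eq_of_ncard_lt_of_maps_to hlt
      fun x hx => ⟨(hρ x hx).1, hmiss x hx⟩
    obtain ⟨Z, hZ, hZcard, hPD⟩ := exists_PD_lt_of_two_mem_desc hl hY hm₁ (hρ y hy).1
      (Set.disjoint_left.mpr fun x hx hxm => hmiss x hx (hρ_eq x hx m₁ hm₁ hxm))
      ⟨hy, (hρ y hy).2⟩ ⟨hy', hρy ▸ (hρ y' hy').2⟩ hne
    exact (hmax Z hZ hZcard).not_gt hPD
  intro m hm
  obtain ⟨x, hx, rfl⟩ := hsurj m hm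
  refine Set.ncard_eq_one.mpr ⟨x, Set.ext fun y => ⟨fun ⟨hy, hyx⟩ => ?_, ?_⟩⟩
  · exact Set.inj_on_of_surj_on_of_ncard_le (fun x _ => ρ x) (fun x hx => (hρ x hx).1) hsurj
      hcard.le hy hx (hρ_eq y hy _ (hρ x hx).1 hyx)
  · rintro rfl
    exact ⟨hx, (hρ _ hx).2⟩

lemma PD_eq_of_ncard_inter_desc_eq_one (hl : ∀ x, T.IsLeaf x → T.hgt x = h) {d : ℝ}
    (hd : 0 ≤ d) {Y Y' : Set V} (hY : Y ⊆ T.leaves) (hY' : Y' ⊆ T.leaves)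
    (hone : ∀ m ∈ T.compRoots d, (Y ∩ T.desc m).ncard = 1)
    (hone' : ∀ m ∈ T.compRoots d, (Y' ∩ T.desc m).ncard = 1) : T.PD Y' = T.PD Y := by
  have hmem : ∀ {Z : Set V}, (∀ m ∈ T.compRoots d, (Z ∩ T.desc m).ncard = 1) →
      ∀ m ∈ T.compRoots d, (Z ∩ T.desc m).Nonempty ∧ ∀ u ∈ Z ∩ T.desc m, ∀ v ∈ Z ∩ T.desc m,
        u = v := fun hZ m hm =>
    ⟨Set.nonempty_of_ncard_ne_zero (by rw [hZ m hm]; exact one_ne_zero),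
      (Set.ncard_le_one (Set.toFinite _)).mp (hZ m hm).le⟩
  induction hn : (Y' \ Y).ncard generalizing Y' with
  | zero =>
    have hsub : Y' ⊆ Y := Set.sdiff_eq_empty.mp ((Set.ncard_eq_zero (Set.toFinite _)).mp hn)
    suffices Y ⊆ Y' by rw [hsub.antisymm this]
    intro y hy
    obtain ⟨m, hm, hmy⟩ := exists_compRoot_anc (leaf_mem_R hd (hY hy))
    obtain ⟨⟨x, hxY', hxm⟩, -⟩ := hmem hone' m hm
    exact (hmem hone m hm).2 x ⟨hsub hxY', hxm⟩ y ⟨hy, hmy⟩ ▸ hxY'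
  | succ n ih =>
    obtain ⟨x, hxY', hxY⟩ := Set.nonempty_of_ncard_ne_zero (by rw [hn]; exact n.succ_ne_zero)
    obtain ⟨m, hm, hmx⟩ := exists_compRoot_anc (leaf_mem_R hd (hY' hxY'))
    obtain ⟨⟨a, haY, ham⟩, -⟩ := hmem hone m hm
    have honly : ∀ u ∈ Y' ∩ T.desc m, u = x := fun u hu => (hmem hone' m hm).2 u hu x ⟨hxY', hmx⟩
    have haY' : a ∉ Y' := fun haY' => hxY (honly a ⟨haY', ham⟩ ▸ haY)
    have hdisj : Disjoint (Y' \ {x}) (T.desc m) :=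
      Set.disjoint_left.mpr fun u hu hum => hu.2 (honly u ⟨hu.1, hum⟩)
    have hswap := PD_insert_eq_of_disjoint_desc hl hm (hY' hxY') (hY haY) hmx ham hdisj
    rw [Set.insert_sdiff_singleton, Set.insert_eq_of_mem hxY'] at hswap
    rw [hswap]
    refine ih (Set.insert_subset (hY haY) (Set.sdiff_subset.trans hY')) (fun m' hm' => ?_) ?_
    · rw [Set.ncard_insert_sdiff_singleton_inter hxY' haY', hone' m' hm']
      exact ⟨fun hxm' => compRoots_eq_of_mem_desc hl hm' hm hxm' hmx ▸ ham,
        fun ham' => compRoots_eq_of_mem_desc hl hm' hm ham' ham ▸ hmx⟩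
    · rw [Set.insert_sdiff_of_mem _ haY, Set.sdiff_sdiff_comm,
        Set.ncard_sdiff_singleton_of_mem (show x ∈ Y' \ Y from ⟨hxY', hxY⟩), hn, Nat.add_sub_cancel]

end OnePerComponent

end PhyloTree

/-- Corollary 1 of the paper.  If `k` is a branching value of
an ultrametric rooted phylogenetic tree `T`, then a set `A` of `k` leaves is a
size-`k` maxPD set if and only if `A` contains exactly one leaf from each
component of `T[R(d_k)]`. -/
theorem isMaxPD_iff_one_per_component
    {V : Type} [Fintype V] [DecidableEq V] (T : PhyloTree V)
    (hU : T.Ultrametric) (A : Set V) (hA : A ⊆ T.leaves) (k : ℕ)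
    (hcard : A.ncard = k) (hbv : T.IsBranchingValue k) :
    T.IsMaxPD k A ↔
      ∀ C ∈ T.components (T.R (T.branchDist k)), (A ∩ C).ncard = 1 := by
  obtain ⟨x₀, hx₀, -⟩ := T.exists_leaf_desc T.root
  have hl : ∀ x, T.IsLeaf x → T.hgt x = T.hgt x₀ := fun x hx => hU x x₀ hx hx₀
  obtain ⟨hd, hk⟩ := PhyloTree.branchDist_spec hl hbv
  rw [PhyloTree.ccount_eq_ncard_compRoots hl] at hk
  rw [PhyloTree.components_R_eq hl, Set.forall_mem_image]
  obtain ⟨B, ⟨hB, hBk⟩, hBmax⟩ := Set.exists_max_image {Y | Y ⊆ T.leaves ∧ Y.ncard = k} T.PD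
    (Set.toFinite _) ⟨A, hA, hcard⟩
  have hBone := PhyloTree.ncard_inter_desc_eq_one_of_forall_PD_le hl hd hB (hBk.trans hk.symm)
    fun Z hZ hZk => hBmax Z ⟨hZ, hZk.trans hBk⟩
  constructor
  · intro hmax
    exact PhyloTree.ncard_inter_desc_eq_one_of_forall_PD_le hl hd hA (hcard.trans hk.symm)
      fun Z hZ hZk => hmax.2.2 Z hZ (hZk.trans hcard)
  · intro hone
    refine ⟨hA, hcard, fun Y hY hYk => ?_⟩
    rw [PhyloTree.PD_eq_of_ncard_inter_desc_eq_one hl hd hB hA hBone hone]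
    exact hBmax Y ⟨hY, hYk⟩
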